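/- arXiv:2509.11331 — 3 statements merged into one kernel-verified Lean document; each statement's English description precedes it below -/
import Mathlib

section
/- For any oriented graph G = (V, E), the commutativity rank satisfies η(G) ≤ min(|V|², |E|) · min(|V|, |E| + 1) + |E|. -/
/-- An oriented graph: finite nonempty sets of vertices and edges with
origin and tail maps. -/
structure OrientedGraph where
  V : Type
  E : Type
  [fintypeV : Fintype V]
  [fintypeE : Fintype E]
  [nonemptyV : Nonempty V]
  [nonemptyE : Nonempty E]
  o : E → V
  t : E → V

attribute [instance] OrientedGraph.fintypeV OrientedGraph.fintypeE
  OrientedGraph.nonemptyV OrientedGraph.nonemptyE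

namespace OrientedGraph

variable (G : OrientedGraph)

/-- `G.IsPath p u v` : the edge sequence `p` is a path from `u` to `v`
(consecutive edges are composable; paths of length 0 at any vertex are allowed). -/
def IsPath (p : List G.E) (u v : G.V) : Prop :=
  List.Chain' (fun e f => G.t e = G.o f) p ∧
  ((p = [] ∧ u = v) ∨
    ∃ h : p ≠ [], u = G.o (p.head h) ∧ v = G.t (p.getLast h))

/-- The label of an edge sequence: the product of the labels of its edges
(the empty sequence maps to `1`). -/
def labelProd {M : Type} [Monoid M] (l : G.E → M) (s : List G.E) : M :=
  (s.map l).prod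

/-- The diagram `(G, l)` is commutative: any two paths with the same origin and
the same tail have equal labels. -/
def IsCommutative {M : Type} [Monoid M] (l : G.E → M) : Prop :=
  ∀ (u v : G.V) (p₁ p₂ : List G.E),
    G.IsPath p₁ u v → G.IsPath p₂ u v → G.labelProd l p₁ = G.labelProd l p₂

/-- A complete system of relations for `G`: for every monoid `M` and every
labeling `l : E → M`, the diagram `(G, l)` is commutative iff all relations hold. -/
def IsComplete (R : Finset (List G.E × List G.E)) : Prop :=
  ∀ (M : Type) [Monoid M], ∀ l : G.E → M,
    G.IsCommutative l ↔ ∀ r ∈ R, G.labelProd l r.1 = G.labelProd l r.2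

/-- A minimal complete system of relations: no proper subset is complete. -/
def IsMinimalComplete (R : Finset (List G.E × List G.E)) : Prop :=
  G.IsComplete R ∧ ∀ R' : Finset (List G.E × List G.E), R' ⊂ R → ¬ G.IsComplete R'

/-- The commutativity rank `η(G)`: the minimal cardinality of a complete
system of relations for `G`. -/
noncomputable def eta : ℕ :=
  sInf {n : ℕ | ∃ R : Finset (List G.E × List G.E), G.IsComplete R ∧ R.card = n}

/-- `S'` is obtained from `S` by one multiplication. -/
def MulStep (S S' : Set (List G.E)) : Prop :=
  ∃ s ∈ S, ∃ s' ∈ S, S' = S ∪ {s ++ s'}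

/-- `G.mCost S S'` : the minimal number of multiplications needed to obtain `S'`
from `S` (`⊤` if impossible). -/
noncomputable def mCost (S S' : Set (List G.E)) : ℕ∞ :=
  sInf {k : ℕ∞ | ∃ n : ℕ, k = n ∧ ∃ f : ℕ → Set (List G.E),
    f 0 = S ∧ f n = S' ∧ ∀ i < n, G.MulStep (f i) (f (i + 1))}

/-- `S_R`: the set of all edge sequences appearing in the relations of `R`. -/
def relSet (R : Finset (List G.E × List G.E)) : Set (List G.E) :=
  {s | ∃ r ∈ R, s = r.1 ∨ s = r.2}

/-- `ℰ`: the empty sequence together with all one-edge sequences. -/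
def baseSet : Set (List G.E) :=
  {s | s = [] ∨ ∃ e : G.E, s = [e]}

/-- `m(R)`: the minimal number of multiplications needed to build all sequences
appearing in `R`, starting from `ℰ`. -/
noncomputable def mRel (R : Finset (List G.E × List G.E)) : ℕ∞ :=
  sInf {k : ℕ∞ | ∃ S : Set (List G.E), G.relSet R ⊆ S ∧ k = G.mCost G.baseSet S}

/-- The multiplication rank `ν(G)`. -/
noncomputable def nu : ℕ∞ :=
  sInf {k : ℕ∞ | ∃ R : Finset (List G.E × List G.E), G.IsComplete R ∧ k = G.mRel R}

/-- A 4-tuple of edges `(a, b, c, d)` forms a rhomboid. -/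
def IsRhomboid (r : G.E × G.E × G.E × G.E) : Prop :=
  G.o r.1 = G.o r.2.2.1 ∧ G.t r.2.1 = G.t r.2.2.2 ∧
  G.t r.1 = G.o r.2.1 ∧ G.t r.2.2.1 = G.o r.2.2.2 ∧
  G.o r.1 ≠ G.t r.1 ∧ G.o r.1 ≠ G.o r.2.2.2 ∧ G.o r.1 ≠ G.t r.2.2.2 ∧
  G.t r.1 ≠ G.o r.2.2.2 ∧ G.t r.1 ≠ G.t r.2.2.2 ∧ G.o r.2.2.2 ≠ G.t r.2.2.2

/-- Two rhomboids `(a, b, c, d)` and `(a', b', c', d')` are disjoint. -/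
def RhDisjoint (r r' : G.E × G.E × G.E × G.E) : Prop :=
  (r.1 ≠ r'.1 ∨ r.2.1 ≠ r'.2.1) ∧
  (r.1 ≠ r'.2.2.1 ∨ r.2.1 ≠ r'.2.2.2) ∧
  (r.2.2.1 ≠ r'.2.2.1 ∨ r.2.2.2 ≠ r'.2.2.2) ∧
  (r.2.2.1 ≠ r'.1 ∨ r.2.2.2 ≠ r'.2.1)

/-- `𝔯𝔥(G)`: the maximal cardinality of a family of pairwise disjoint rhomboids in `G`. -/
noncomputable def rhNum : ℕ :=
  sSup {n : ℕ | ∃ F : Finset (G.E × G.E × G.E × G.E),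
    (∀ r ∈ F, G.IsRhomboid r) ∧
    (∀ r ∈ F, ∀ r' ∈ F, r ≠ r' → G.RhDisjoint r r') ∧ F.card = n}

/-- `𝔏(G)`: the number of loops of `G`. -/
noncomputable def loopCount : ℕ :=
  Nat.card {e : G.E // G.o e = G.t e}

/-- `G` is quasi-acyclic: no directed cycle visiting two or more distinct vertices. -/
def QuasiAcyclic : Prop :=
  ∀ u v : G.V, u ≠ v →
    ∀ p q : List G.E, G.IsPath p u v → G.IsPath q v u → False

/-- `G` is 2-path-bounded: every oriented path avoiding loop edges has length at most 2. -/
def TwoPathBounded : Prop :=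
  ∀ (p : List G.E) (u v : G.V), G.IsPath p u v →
    (∀ e ∈ p, G.o e ≠ G.t e) → p.length ≤ 2

/-- `G` has a pair of multiple edges. -/
def HasMultipleEdges : Prop :=
  ∃ e e' : G.E, e ≠ e' ∧ G.t e = G.t e' ∧ G.o e = G.o e' ∧ G.t e ≠ G.o e

/-- `G` has a triangle. -/
def HasTriangle : Prop :=
  ∃ a b c : G.E, G.o a = G.o b ∧ G.t b = G.o c ∧ G.t c = G.t a ∧
    G.o a ≠ G.t a ∧ G.o b ≠ G.t b ∧ G.o c ≠ G.t c

/-- `G` has no loops. -/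
def NoLoops : Prop := ∀ e : G.E, G.o e ≠ G.t e

/-- Every edge occurring on either side of the relation `r` is a loop. -/
def AllLoops (r : List G.E × List G.E) : Prop :=
  (∀ e ∈ r.1, G.o e = G.t e) ∧ (∀ e ∈ r.2, G.o e = G.t e)

/-- Both sides of the relation `r` contain at least one non-loop edge. -/
def BothSidesNonLoop (r : List G.E × List G.E) : Prop :=
  (∃ e ∈ r.1, G.o e ≠ G.t e) ∧ (∃ e ∈ r.2, G.o e ≠ G.t e)

end OrientedGraph

/-- The triploid `T(n₁, n₂, n₃, n₀, e)`. -/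
def Triploid (n₁ n₂ n₃ n₀ e : ℕ) (hn₁ : 0 < n₁) (he : n₂ * (n₁ + n₃) ≤ e)
    (he₀ : 0 < e) : OrientedGraph where
  V := Fin n₀ ⊕ Fin n₁ ⊕ Fin n₂ ⊕ Fin n₃
  E := (Fin n₁ × Fin n₂) ⊕ (Fin n₂ × Fin n₃) ⊕ Fin (e - n₂ * (n₁ + n₃))
  nonemptyV := ⟨Sum.inr (Sum.inl ⟨0, hn₁⟩)⟩
  nonemptyE := by
    by_cases h : n₂ * (n₁ + n₃) < e
    · exact ⟨Sum.inr (Sum.inr ⟨0, by omega⟩)⟩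
    · have h2 : 0 < n₂ := by
        rcases Nat.eq_zero_or_pos n₂ with h0 | h0
        · exfalso; subst h0; simp at h; omega
        · exact h0
      exact ⟨Sum.inl (⟨0, hn₁⟩, ⟨0, h2⟩)⟩
  o := Sum.elim (fun p => Sum.inr (Sum.inl p.1))
        (Sum.elim (fun p => Sum.inr (Sum.inr (Sum.inl p.1)))
          (fun _ => Sum.inr (Sum.inl ⟨0, hn₁⟩)))
  t := Sum.elim (fun p => Sum.inr (Sum.inr (Sum.inl p.2)))
        (Sum.elim (fun p => Sum.inr (Sum.inr (Sum.inr p.2)))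
          (fun _ => Sum.inr (Sum.inl ⟨0, hn₁⟩)))

/-!
Fix for every pair of vertices `u, v` a path `canon u v` from `u` to `v` (empty when `u = v`
or when there is none). A diagram is commutative as soon as every path has the label of the
canonical path between its endpoints, and by induction on the path it suffices to know
`l [e] = l (canon (o e) (t e))` for every edge `e` and
`l (canon u w ++ canon w v) = l (canon u v)` whenever `(u, w)` are the endpoints of an edge and
`v` is reachable from `w`. There are at most `min (|V|², |E|)` endpoint pairs of edges, and at
most `min (|V|, |E| + 1)` vertices reachable from a given one, since each of them other than
the starting vertex is the tail of an edge.
-/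

namespace OrientedGraph

variable (G : OrientedGraph)

section Paths

variable {G}

theorem isPath_iff_isChain {p : List G.E} {u v : G.V} :
    G.IsPath p u v ↔ List.IsChain (fun e f => G.t e = G.o f) p ∧
      ((p = [] ∧ u = v) ∨ ∃ h : p ≠ [], u = G.o (p.head h) ∧ v = G.t (p.getLast h)) :=
  Iff.rfl

theorem isPath_nil {u v : G.V} : G.IsPath [] u v ↔ u = v := by
  simp [isPath_iff_isChain]

theorem isPath_cons {e : G.E} {q : List G.E} {u v : G.V} :
    G.IsPath (e :: q) u v ↔ u = G.o e ∧ G.IsPath q (G.t e) v := by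
  cases q with
  | nil => simp [isPath_iff_isChain, eq_comm]
  | cons f q => simp [isPath_iff_isChain, List.isChain_cons_cons, and_left_comm, and_assoc]

theorem isPath_singleton (e : G.E) : G.IsPath [e] (G.o e) (G.t e) :=
  isPath_cons.2 ⟨rfl, isPath_nil.2 rfl⟩

theorem IsPath.append {p q : List G.E} {u w v : G.V} (hp : G.IsPath p u w)
    (hq : G.IsPath q w v) : G.IsPath (p ++ q) u v := by
  induction p generalizing u with
  | nil => rwa [isPath_nil.1 hp]
  | cons e p ih =>
    rw [isPath_cons] at hp
    exact isPath_cons.2 ⟨hp.1, ih hp.2⟩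

end Paths

def Reachable (u v : G.V) : Prop :=
  ∃ p, G.IsPath p u v

theorem Reachable.eq_or_exists_t_eq {u v : G.V} (h : G.Reachable u v) :
    v = u ∨ ∃ e, G.t e = v := by
  obtain ⟨p, -, ⟨-, rfl⟩ | ⟨_, -, rfl⟩⟩ := h
  · exact .inl rfl
  · exact .inr ⟨_, rfl⟩

open Classical in
noncomputable def canon (u v : G.V) : List G.E :=
  if h : G.Reachable u v ∧ u ≠ v then h.1.choose else []

theorem canon_self (u : G.V) : G.canon u u = [] := by
  simp [canon]

theorem isPath_canon {u v : G.V} (h : G.Reachable u v) : G.IsPath (G.canon u v) u v := by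
  by_cases huv : u = v
  · subst huv
    rw [canon_self, isPath_nil]
  · rw [canon, dif_pos ⟨h, huv⟩]
    exact h.choose_spec

theorem labelProd_append {M : Type} [Monoid M] (l : G.E → M) (p q : List G.E) :
    G.labelProd l (p ++ q) = G.labelProd l p * G.labelProd l q := by
  simp [labelProd]

theorem labelProd_cons {M : Type} [Monoid M] (l : G.E → M) (e : G.E) (p : List G.E) :
    G.labelProd l (e :: p) = G.labelProd l [e] * G.labelProd l p := by
  simp [labelProd]

section Relations

open Classical

noncomputable def reachableFrom (w : G.V) : Finset G.V :=
  Finset.univ.filter (G.Reachable w)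

noncomputable def endpointPairs : Finset (G.V × G.V) :=
  Finset.univ.image fun e => (G.o e, G.t e)

noncomputable def edgeRelations : Finset (List G.E × List G.E) :=
  Finset.univ.image fun e => ([e], G.canon (G.o e) (G.t e))

noncomputable def transRelations : Finset (List G.E × List G.E) :=
  G.endpointPairs.biUnion fun uw =>
    (G.reachableFrom uw.2).image fun v =>
      (G.canon uw.1 uw.2 ++ G.canon uw.2 v, G.canon uw.1 v)

noncomputable def canonRelations : Finset (List G.E × List G.E) :=
  G.transRelations ∪ G.edgeRelations

theorem card_reachableFrom_le (w : G.V) :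
    (G.reachableFrom w).card ≤ min (Fintype.card G.V) (Fintype.card G.E + 1) := by
  refine le_min (Finset.card_le_univ _) ?_
  have hsub : G.reachableFrom w ⊆ insert w (Finset.univ.image G.t) := by
    intro v hv
    rcases (Finset.mem_filter.1 hv).2.eq_or_exists_t_eq with rfl | ⟨e, rfl⟩
    · exact Finset.mem_insert_self _ _
    · exact Finset.mem_insert_of_mem (Finset.mem_image_of_mem _ (Finset.mem_univ e))
  calc (G.reachableFrom w).card ≤ (insert w (Finset.univ.image G.t)).card :=
        Finset.card_le_card hsub
    _ ≤ (Finset.univ.image G.t).card + 1 := Finset.card_insert_le _ _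
    _ ≤ Fintype.card G.E + 1 := by grw [Finset.card_image_le, Finset.card_univ]

theorem card_endpointPairs_le :
    G.endpointPairs.card ≤ min (Fintype.card G.V ^ 2) (Fintype.card G.E) :=
  le_min ((Finset.card_le_univ _).trans_eq (by rw [Fintype.card_prod, sq]))
    (Finset.card_image_le.trans_eq Finset.card_univ)

theorem card_canonRelations_le :
    G.canonRelations.card ≤ min (Fintype.card G.V ^ 2) (Fintype.card G.E) *
      min (Fintype.card G.V) (Fintype.card G.E + 1) + Fintype.card G.E := by
  have htrans : G.transRelations.card ≤ G.endpointPairs.card *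
      min (Fintype.card G.V) (Fintype.card G.E + 1) :=
    Finset.card_biUnion_le_card_mul _ _ _ fun uw _ =>
      Finset.card_image_le.trans (G.card_reachableFrom_le uw.2)
  have hedge : G.edgeRelations.card ≤ Fintype.card G.E :=
    Finset.card_image_le.trans_eq Finset.card_univ
  calc G.canonRelations.card ≤ G.transRelations.card + G.edgeRelations.card :=
        Finset.card_union_le _ _
    _ ≤ _ := by grw [htrans, hedge, G.card_endpointPairs_le]

theorem edge_mem_canonRelations (e : G.E) :
    ([e], G.canon (G.o e) (G.t e)) ∈ G.canonRelations :=
  Finset.mem_union_right _ (Finset.mem_image_of_mem _ (Finset.mem_univ e))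

theorem trans_mem_canonRelations (e : G.E) {v : G.V} (hv : G.Reachable (G.t e) v) :
    (G.canon (G.o e) (G.t e) ++ G.canon (G.t e) v, G.canon (G.o e) v) ∈ G.canonRelations := by
  refine Finset.mem_union_left _ (Finset.mem_biUnion.2 ⟨(G.o e, G.t e), ?_, ?_⟩)
  · exact Finset.mem_image_of_mem _ (Finset.mem_univ e)
  · exact Finset.mem_image_of_mem _ (Finset.mem_filter.2 ⟨Finset.mem_univ v, hv⟩)

theorem exists_isPath_of_mem_canonRelations {r : List G.E × List G.E}
    (hr : r ∈ G.canonRelations) : ∃ u v, G.IsPath r.1 u v ∧ G.IsPath r.2 u v := by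
  rcases Finset.mem_union.1 hr with hr | hr
  · obtain ⟨⟨u, w⟩, huw, hr⟩ := Finset.mem_biUnion.1 hr
    obtain ⟨e, -, he⟩ := Finset.mem_image.1 huw
    obtain ⟨v, hv, rfl⟩ := Finset.mem_image.1 hr
    cases he
    have hpath := (G.isPath_canon ⟨_, isPath_singleton e⟩).append
      (G.isPath_canon (Finset.mem_filter.1 hv).2)
    exact ⟨_, _, hpath, G.isPath_canon ⟨_, hpath⟩⟩
  · obtain ⟨e, -, rfl⟩ := Finset.mem_image.1 hr
    exact ⟨_, _, isPath_singleton e, G.isPath_canon ⟨_, isPath_singleton e⟩⟩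

theorem labelProd_eq_canon_of_canonRelations {M : Type} [Monoid M] {l : G.E → M}
    (hrel : ∀ r ∈ G.canonRelations, G.labelProd l r.1 = G.labelProd l r.2)
    {p : List G.E} {u v : G.V} (hp : G.IsPath p u v) :
    G.labelProd l p = G.labelProd l (G.canon u v) := by
  induction p generalizing u with
  | nil => rw [isPath_nil.1 hp, canon_self]
  | cons e q ih =>
    obtain ⟨rfl, hq⟩ := isPath_cons.1 hp
    calc G.labelProd l (e :: q) = G.labelProd l [e] * G.labelProd l q := labelProd_cons ..
      _ = G.labelProd l (G.canon (G.o e) (G.t e)) * G.labelProd l (G.canon (G.t e) v) := by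
        rw [hrel _ (G.edge_mem_canonRelations e), ih hq]
      _ = G.labelProd l (G.canon (G.o e) v) := by
        rw [← labelProd_append, hrel _ (G.trans_mem_canonRelations e ⟨q, hq⟩)]

theorem isComplete_canonRelations : G.IsComplete G.canonRelations := by
  intro M _ l
  refine ⟨fun hcomm r hr => ?_, fun hrel u v p₁ p₂ h₁ h₂ => ?_⟩
  · obtain ⟨u, v, h₁, h₂⟩ := G.exists_isPath_of_mem_canonRelations hr
    exact hcomm u v _ _ h₁ h₂
  · rw [G.labelProd_eq_canon_of_canonRelations hrel h₁,
      G.labelProd_eq_canon_of_canonRelations hrel h₂]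

end Relations

theorem eta_le_card {R : Finset (List G.E × List G.E)} (hR : G.IsComplete R) :
    G.eta ≤ R.card :=
  Nat.sInf_le ⟨R, hR, rfl⟩

end OrientedGraph

/-- Theorem (upper bound on commutativity rank):
`η(G) ≤ min(|V|², |E|) · min(|V|, |E| + 1) + |E|`. -/
theorem eta_upper_bound (G : OrientedGraph) :
    G.eta ≤ min (Fintype.card G.V ^ 2) (Fintype.card G.E) *
      min (Fintype.card G.V) (Fintype.card G.E + 1) + Fintype.card G.E :=
  (G.eta_le_card G.isComplete_canonRelations).trans G.card_canonRelations_le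
end

section
/- For any integers n, m ≥ 4 there exists an oriented graph G = (V, E) with |V| = n and |E| = m, isomorphic to a triploid T(n₁, n₂, n₃, n₀, e) for some non-negative integers n₁, n₂, n₃, n₀, e, such that 𝔯𝔥(G) + 𝔏(G) ≥ 2⁻¹⁴ · (min(m, n²) · min(m, n) + m) and 𝔯𝔥(G) ≥ 2⁻¹⁴ · (min(m, n²) · min(m, n)). -/
/-!
Take the triploid `T(t, 2k, t, n₀, m)` with `t = ⌊min(m, n)/4⌋`, `k = min(⌊n/4⌋, ⌊m/4t⌋)` and `n₀`
the remaining vertices: its `4tk` non-loop edges fit into `m`, and the other edges are loops.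
For outer vertices `i`, `j` and a pair `{2w, 2w+1}` of middle vertices, the paths `i → 2w → j` and
`i → 2w+1 → j` form a rhomboid; these `t²k` rhomboids use pairwise distinct two-paths, hence are
pairwise disjoint. As `8t ≥ min(m, n)` and either `8k ≥ n` or `8tk ≥ m`, we get
`512 t²k ≥ min(m, n²) · min(m, n)`, and `m ≤ 4t²k + (m - 4tk)` accounts for the extra `m`.
-/

namespace OrientedGraph

variable (G : OrientedGraph)

theorem card_le_rhNum (F : Finset (G.E × G.E × G.E × G.E)) (hrh : ∀ r ∈ F, G.IsRhomboid r)
    (hdisj : ∀ r ∈ F, ∀ r' ∈ F, r ≠ r' → G.RhDisjoint r r') : F.card ≤ G.rhNum :=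
  le_csSup ⟨Fintype.card (G.E × G.E × G.E × G.E), by rintro _ ⟨F, -, -, rfl⟩; exact F.card_le_univ⟩
    ⟨F, hrh, hdisj, rfl⟩

def rhomboidOf (p q : G.E × G.E) : G.E × G.E × G.E × G.E :=
  (p.1, p.2, q.1, q.2)

variable {G}

-- Rhomboids are disjoint iff neither two-path `(a, b)`, `(c, d)` of one is a two-path of the other.
theorem rhDisjoint_rhomboidOf {ι : Type*} {P : ι × Fin 2 → G.E × G.E} (hP : Function.Injective P)
    {x y : ι} (hxy : x ≠ y) :
    G.RhDisjoint (G.rhomboidOf (P (x, 0)) (P (x, 1))) (G.rhomboidOf (P (y, 0)) (P (y, 1))) := by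
  have hne : ∀ i j, P (x, i) ≠ P (y, j) := fun i j h => hxy (congrArg Prod.fst (hP h))
  refine ⟨?_, ?_, ?_, ?_⟩ <;> dsimp only [rhomboidOf] <;> rw [← not_and_or, ← Prod.ext_iff] <;>
    apply hne

theorem card_le_rhNum_of_injective {ι : Type*} [Fintype ι] (P : ι × Fin 2 → G.E × G.E)
    (hP : Function.Injective P) (hrh : ∀ x, G.IsRhomboid (G.rhomboidOf (P (x, 0)) (P (x, 1)))) :
    Fintype.card ι ≤ G.rhNum := by
  classical
  set r : ι → G.E × G.E × G.E × G.E := fun x => G.rhomboidOf (P (x, 0)) (P (x, 1))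
  have hr : Function.Injective r := fun x y h =>
    congrArg Prod.fst
      (hP (Prod.ext (congrArg Prod.fst h :) (congrArg (·.2.1) h :) : P (x, 0) = P (y, 0)))
  rw [← Finset.card_univ, ← Finset.card_image_of_injective _ hr]
  refine G.card_le_rhNum _ ?_ ?_
  · simpa only [Finset.mem_image, Finset.mem_univ, true_and, forall_exists_index,
      forall_apply_eq_imp_iff] using hrh
  · simp only [Finset.mem_image, Finset.mem_univ, true_and]
    rintro _ ⟨x, rfl⟩ _ ⟨y, rfl⟩ hne
    exact rhDisjoint_rhomboidOf hP (ne_of_apply_ne r hne)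

end OrientedGraph

namespace Triploid

section

variable {n₁ n₂ n₃ n₀ e : ℕ} (hn₁ : 0 < n₁) (he : n₂ * (n₁ + n₃) ≤ e) (he₀ : 0 < e)

theorem card_V : Fintype.card (Triploid n₁ n₂ n₃ n₀ e hn₁ he he₀).V = n₀ + n₁ + n₂ + n₃ := by
  change Fintype.card (Fin n₀ ⊕ Fin n₁ ⊕ Fin n₂ ⊕ Fin n₃) = _
  simp only [Fintype.card_sum, Fintype.card_fin]
  ring

theorem card_E : Fintype.card (Triploid n₁ n₂ n₃ n₀ e hn₁ he he₀).E = e := by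
  change Fintype.card ((Fin n₁ × Fin n₂) ⊕ (Fin n₂ × Fin n₃) ⊕ Fin (e - n₂ * (n₁ + n₃))) = e
  simp only [Fintype.card_sum, Fintype.card_prod, Fintype.card_fin]
  have : n₁ * n₂ + n₂ * n₃ = n₂ * (n₁ + n₃) := by ring
  omega

theorem sub_le_loopCount : e - n₂ * (n₁ + n₃) ≤ (Triploid n₁ n₂ n₃ n₀ e hn₁ he he₀).loopCount := by
  set G := Triploid n₁ n₂ n₃ n₀ e hn₁ he he₀
  let loop : Fin (e - n₂ * (n₁ + n₃)) → {x : G.E // G.o x = G.t x} :=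
    fun l => ⟨Sum.inr (Sum.inr l), rfl⟩
  have hloop : Function.Injective loop := fun _ _ h =>
    Sum.inr_injective (Sum.inr_injective (congrArg Subtype.val h))
  simpa [OrientedGraph.loopCount] using Nat.card_le_card_of_injective loop hloop

end

theorem mul_mul_le_rhNum {n₁ k n₃ n₀ e : ℕ} (hn₁ : 0 < n₁) (he : k * 2 * (n₁ + n₃) ≤ e)
    (he₀ : 0 < e) : n₁ * k * n₃ ≤ (Triploid n₁ (k * 2) n₃ n₀ e hn₁ he he₀).rhNum := by
  set G := Triploid n₁ (k * 2) n₃ n₀ e hn₁ he he₀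
  let mid : Fin k × Fin 2 → Fin (k * 2) := finProdFinEquiv
  let P : (Fin n₁ × Fin k × Fin n₃) × Fin 2 → G.E × G.E := fun ⟨⟨i, w, j⟩, b⟩ =>
    (Sum.inl (i, mid (w, b)), Sum.inr (Sum.inl (mid (w, b), j)))
  have hP : Function.Injective P := by
    rintro ⟨⟨i, w, j⟩, b⟩ ⟨⟨i', w', j'⟩, b'⟩ h
    obtain ⟨ha, hb⟩ := Prod.mk.inj h
    obtain ⟨rfl, hmid⟩ := Prod.mk.inj (Sum.inl_injective ha)
    obtain ⟨-, rfl⟩ := Prod.mk.inj (Sum.inl_injective (Sum.inr_injective hb))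
    obtain ⟨rfl, rfl⟩ := Prod.mk.inj (finProdFinEquiv.injective hmid)
    rfl
  have hrh : ∀ x, G.IsRhomboid (G.rhomboidOf (P (x, 0)) (P (x, 1))) := by
    rintro ⟨i, w, j⟩
    have hmid : mid (w, 0) ≠ mid (w, 1) := finProdFinEquiv.injective.ne (by simp)
    simp [OrientedGraph.IsRhomboid, OrientedGraph.rhomboidOf, P, G, Triploid, hmid]
  simpa [mul_assoc] using G.card_le_rhNum_of_injective P hP hrh

end Triploid

theorem min_sq_le_mul_min (m n : ℕ) : min m (n ^ 2) ≤ n * min m n := by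
  rcases le_total m n with h | h
  · rw [min_eq_left h]
    rcases Nat.eq_zero_or_pos n with rfl | hn
    · simp
    · exact (min_le_left _ _).trans (Nat.le_mul_of_pos_left m hn)
  · rw [min_eq_right h, sq]
    exact min_le_right _ _

theorem min_mul_min_le {m n t k : ℕ} (ht : min m n ≤ 8 * t) (hk : n ≤ 8 * k ∨ m ≤ 8 * (t * k)) :
    min m (n ^ 2) * min m n ≤ 512 * (t * k * t) := by
  have hc : min m (n ^ 2) ≤ 64 * (t * k) := by
    rcases hk with hk | hk
    · calc min m (n ^ 2) ≤ n * min m n := min_sq_le_mul_min m n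
        _ ≤ 8 * k * (8 * t) := Nat.mul_le_mul hk ht
        _ = 64 * (t * k) := by ring
    · exact (min_le_left _ _).trans (by omega)
  calc min m (n ^ 2) * min m n ≤ 64 * (t * k) * (8 * t) := Nat.mul_le_mul hc ht
    _ = 512 * (t * k * t) := by ring

theorem exists_triploid_params {n m : ℕ} (hn : 4 ≤ n) (hm : 4 ≤ m) :
    ∃ t k : ℕ, 0 < t ∧ t + k * 2 + t ≤ n ∧ k * 2 * (t + t) ≤ m ∧
      min m (n ^ 2) * min m n ≤ 512 * (t * k * t) := by
  set t := min m n / 4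
  set k := min (n / 4) (m / (4 * t))
  have ht : 0 < t := by omega
  have h4t : 4 * t ≤ m := by omega
  have hkm : k * (4 * t) ≤ m :=
    (Nat.mul_le_mul_right _ (min_le_right _ _)).trans (Nat.div_mul_le_self _ _)
  refine ⟨t, k, ht, by omega, by linarith, min_mul_min_le (by omega) ?_⟩
  rcases le_total (n / 4) (m / (4 * t)) with h | h
  · left
    have hk : k = n / 4 := min_eq_left h
    omega
  · right
    have hk : k = m / (4 * t) := min_eq_right h
    have hk1 : 1 ≤ k := by rw [hk]; exact (Nat.one_le_div_iff (by omega)).mpr h4t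
    have := Nat.lt_mul_div_succ m (show 0 < 4 * t by omega)
    rw [← hk] at this
    nlinarith

/-- Theorem: for any `n, m ≥ 4` there exists a graph with `n` vertices and `m` edges,
isomorphic to a triploid, such that `𝔯𝔥(G) + 𝔏(G) ≥ 2⁻¹⁴·(min(m,n²)·min(m,n) + m)`
and `𝔯𝔥(G) ≥ 2⁻¹⁴·(min(m,n²)·min(m,n))`. -/
theorem triploid_lower_bound (n m : ℕ) (hn : 4 ≤ n) (hm : 4 ≤ m) :
    ∃ G : OrientedGraph,
      (∃ (n₁ n₂ n₃ n₀ e : ℕ) (hn₁ : 0 < n₁) (he : n₂ * (n₁ + n₃) ≤ e) (he₀ : 0 < e),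
        G = Triploid n₁ n₂ n₃ n₀ e hn₁ he he₀) ∧
      Fintype.card G.V = n ∧ Fintype.card G.E = m ∧
      min m (n ^ 2) * min m n + m ≤ 2 ^ 14 * (G.rhNum + G.loopCount) ∧
      min m (n ^ 2) * min m n ≤ 2 ^ 14 * G.rhNum := by
  obtain ⟨t, k, ht, hV, hE, hbound⟩ := exists_triploid_params hn hm
  have he₀ : 0 < m := by omega
  set G := Triploid t (k * 2) t (n - (t + k * 2 + t)) m ht hE he₀
  have hR : t * k * t ≤ G.rhNum := Triploid.mul_mul_le_rhNum ht hE he₀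
  have hL : m - k * 2 * (t + t) ≤ G.loopCount := Triploid.sub_le_loopCount ht hE he₀
  have hpaths : k * 2 * (t + t) ≤ 4 * (t * k * t) :=
    calc k * 2 * (t + t) = 4 * (t * k * 1) := by ring
      _ ≤ 4 * (t * k * t) := by gcongr; omega
  refine ⟨G, ⟨_, _, _, _, _, ht, hE, he₀, rfl⟩, ?_, Triploid.card_E ht hE he₀, by omega, by omega⟩
  rw [Triploid.card_V]
  omega
end

section
/- Let G be the triploid T(n₁, n₂, n₃, n₀, e). Then 𝔯𝔥(G) ≥ n₁ · n₃ · ⌊n₂/2⌋ and 𝔏(G) = e − n₂ · (n₁ + n₃). -/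
/-- Theorem: for the triploid `G = T(n₁, n₂, n₃, n₀, e)` we have
`𝔯𝔥(G) ≥ n₁ · n₃ · ⌊n₂/2⌋` and `𝔏(G) = e − n₂ · (n₁ + n₃)`. -/
theorem triploid_rhNum_loopCount (n₁ n₂ n₃ n₀ e : ℕ) (hn₁ : 0 < n₁)
    (he : n₂ * (n₁ + n₃) ≤ e) (he₀ : 0 < e) :
    n₁ * n₃ * (n₂ / 2) ≤ (Triploid n₁ n₂ n₃ n₀ e hn₁ he he₀).rhNum ∧
    (Triploid n₁ n₂ n₃ n₀ e hn₁ he he₀).loopCount = e - n₂ * (n₁ + n₃) := by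
  classical
  constructor
  · -- rhomboid bound
    set G := Triploid n₁ n₂ n₃ n₀ e hn₁ he he₀ with hG
    have hlt : ∀ j : Fin (n₂ / 2), 2 * (j : ℕ) + 1 < n₂ := fun j => by
      have := j.isLt; omega
    have hlt0 : ∀ j : Fin (n₂ / 2), 2 * (j : ℕ) < n₂ := fun j => by
      have := j.isLt; omega
    let f : Fin n₁ × Fin n₃ × Fin (n₂ / 2) → G.E × G.E × G.E × G.E :=
      fun x =>
        (Sum.inl (x.1, ⟨2 * x.2.2, hlt0 x.2.2⟩),
         Sum.inr (Sum.inl (⟨2 * x.2.2, hlt0 x.2.2⟩, x.2.1)),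
         Sum.inl (x.1, ⟨2 * x.2.2 + 1, hlt x.2.2⟩),
         Sum.inr (Sum.inl (⟨2 * x.2.2 + 1, hlt x.2.2⟩, x.2.1)))
    have key1 : ∀ x y : Fin n₁ × Fin n₃ × Fin (n₂ / 2),
        (f x).1 = (f y).1 → (f x).2.1 = (f y).2.1 → x = y := by
      rintro ⟨x1, x3, xj⟩ ⟨y1, y3, yj⟩ h1 h2
      injection h1 with h1
      injection h2 with h2
      injection h2 with h2
      rw [Prod.mk.injEq] at h1 h2
      obtain ⟨ha, hb⟩ := h1
      obtain ⟨-, hc⟩ := h2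
      have hb' := congrArg Fin.val hb
      simp only [Prod.mk.injEq]
      exact ⟨ha, hc, Fin.ext (by simpa using hb')⟩
    have key2 : ∀ x y : Fin n₁ × Fin n₃ × Fin (n₂ / 2),
        (f x).2.2.1 = (f y).2.2.1 → (f x).2.2.2 = (f y).2.2.2 → x = y := by
      rintro ⟨x1, x3, xj⟩ ⟨y1, y3, yj⟩ h1 h2
      injection h1 with h1
      injection h2 with h2
      injection h2 with h2
      rw [Prod.mk.injEq] at h1 h2
      obtain ⟨ha, hb⟩ := h1
      obtain ⟨-, hc⟩ := h2
      have hb' := congrArg Fin.val hb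
      simp only [Prod.mk.injEq]
      exact ⟨ha, hc, Fin.ext (by simpa using hb')⟩
    have key3 : ∀ x y : Fin n₁ × Fin n₃ × Fin (n₂ / 2), (f x).1 ≠ (f y).2.2.1 := by
      rintro ⟨x1, x3, xj⟩ ⟨y1, y3, yj⟩ h
      injection h with h
      rw [Prod.mk.injEq] at h
      have h' := congrArg Fin.val h.2
      simp only at h'
      omega
    have key4 : ∀ x y : Fin n₁ × Fin n₃ × Fin (n₂ / 2), (f x).2.2.1 ≠ (f y).1 := by
      rintro ⟨x1, x3, xj⟩ ⟨y1, y3, yj⟩ h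
      injection h with h
      rw [Prod.mk.injEq] at h
      have h' := congrArg Fin.val h.2
      simp only at h'
      omega
    have hfinj : Function.Injective f := fun x y h =>
      key1 x y (congrArg Prod.fst h) (congrArg (fun z => z.2.1) h)
    let F : Finset (G.E × G.E × G.E × G.E) := Finset.image f Finset.univ
    have hcard : F.card = n₁ * n₃ * (n₂ / 2) := by
      rw [Finset.card_image_of_injective _ hfinj, Finset.card_univ]
      simp [mul_assoc]
    have hmem : ∀ r ∈ F, ∃ x, f x = r := by
      intro r hr
      simp only [F, Finset.mem_image, Finset.mem_univ, true_and] at hr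
      exact hr
    have hrh : ∀ r ∈ F, G.IsRhomboid r := by
      intro r hr
      obtain ⟨x, rfl⟩ := hmem r hr
      refine ⟨rfl, rfl, rfl, rfl, ?_, ?_, ?_, ?_, ?_, ?_⟩ <;>
        simp [f, G, Triploid, Fin.ext_iff] <;> omega
    have hdisj : ∀ r ∈ F, ∀ r' ∈ F, r ≠ r' → G.RhDisjoint r r' := by
      intro r hr r' hr' hne
      obtain ⟨x, rfl⟩ := hmem r hr
      obtain ⟨y, rfl⟩ := hmem r' hr'
      have hxy : x ≠ y := fun h => hne (by rw [h])
      refine ⟨?_, Or.inl (key3 x y), ?_, Or.inl (key4 x y)⟩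
      · by_contra h
        push_neg at h
        exact hxy (key1 x y h.1 h.2)
      · by_contra h
        push_neg at h
        exact hxy (key2 x y h.1 h.2)
    have hBdd : BddAbove {n : ℕ | ∃ F : Finset (G.E × G.E × G.E × G.E),
        (∀ r ∈ F, G.IsRhomboid r) ∧
        (∀ r ∈ F, ∀ r' ∈ F, r ≠ r' → G.RhDisjoint r r') ∧ F.card = n} := by
      refine ⟨Fintype.card (G.E × G.E × G.E × G.E), ?_⟩
      rintro n ⟨F', _, _, rfl⟩
      exact Finset.card_le_univ F'
    exact le_csSup hBdd ⟨F, hrh, hdisj, hcard⟩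
  · -- loop count
    set G := Triploid n₁ n₂ n₃ n₀ e hn₁ he he₀ with hG
    have : {x : G.E // G.o x = G.t x} ≃ Fin (e - n₂ * (n₁ + n₃)) := by
      refine ⟨fun x => ?_, fun j => ⟨Sum.inr (Sum.inr j), rfl⟩, ?_, ?_⟩
      · rcases x with ⟨(⟨i, j⟩ | ⟨j, k⟩ | m), hx⟩
        · exact absurd hx (by simp [G, Triploid])
        · exact absurd hx (by simp [G, Triploid])
        · exact m
      · rintro ⟨(⟨i, j⟩ | ⟨j, k⟩ | m), hx⟩
        · exact absurd hx (by simp [G, Triploid])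
        · exact absurd hx (by simp [G, Triploid])
        · rfl
      · intro j; rfl
    rw [OrientedGraph.loopCount, Nat.card_eq_of_equiv_fin this]
end
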